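/- In a Q-metric space with Q a continuous quantale, if δ₁, δ₂ ≪ 1 and δ ≪ δ₁ ⊗ δ₂, then B_R(B_R(A,δ₁),δ₂) ⊆ B_R(A,δ), where B_R(A,δ) = {y : ∃x ∈ A, δ ≪ d(x,y)}. -/

import Mathlib

/-- `a` is way-below `b`: for every nonempty directed `D` with `b ≤ sSup D`,
some element of `D` dominates `a`. -/
def WayBelow {Q : Type*} [CompleteLattice Q] (a b : Q) : Prop :=
  ∀ D : Set Q, D.Nonempty → DirectedOn (· ≤ ·) D → b ≤ sSup D → ∃ d ∈ D, a ≤ d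

/-- A complete lattice is continuous if every element is the join of the
elements way-below it. -/
def ContinuousLattice (Q : Type*) [CompleteLattice Q] : Prop :=
  ∀ x : Q, x = sSup {y | WayBelow y x}

/-- `B_R(A,δ)`: points belonging to `A` with precision greater than `δ`. -/
def BR {Q X : Type*} [CompleteLattice Q] (d : X → X → Q) (A : Set X) (δ : Q) : Set X :=
  {y | ∃ x ∈ A, WayBelow δ (d x y)}

namespace WayBelow

variable {Q : Type*} [CompleteLattice Q] {a b c : Q}

theorem le (h : WayBelow a b) : a ≤ b := by
  obtain ⟨e, rfl, hae⟩ := h {b} (Set.singleton_nonempty b) (directedOn_singleton b)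
    (le_sSup rfl)
  exact hae

theorem trans_le (h : WayBelow a b) (hbc : b ≤ c) : WayBelow a c :=
  fun D hne hdir hcD => h D hne hdir (hbc.trans hcD)

end WayBelow

theorem BR_tensor_general {Q X : Type*} [CompleteLattice Q] [Monoid Q] [IsQuantale Q]
    (d : X → X → Q)
    (htri : ∀ x y z : X, d x y * d y z ≤ d x z)
    (A : Set X) (δ δ₁ δ₂ : Q)
    (hδ : WayBelow δ (δ₁ * δ₂)) :
    BR d (BR d A δ₁) δ₂ ⊆ BR d A δ := by
  rintro z ⟨y, ⟨x, hxA, hxy⟩, hyz⟩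
  have hxz : δ₁ * δ₂ ≤ d x z := (mul_le_mul' hxy.le hyz.le).trans (htri x y z)
  exact ⟨x, hxA, hδ.trans_le hxz⟩

theorem BR_tensor {Q X : Type*} [CompleteLattice Q] [Monoid Q] [IsQuantale Q]
    (hcont : ContinuousLattice Q) (d : X → X → Q)
    (hrefl : ∀ x : X, 1 ≤ d x x) (htri : ∀ x y z : X, d x y * d y z ≤ d x z)
    (A : Set X) (δ δ₁ δ₂ : Q) (h₁ : WayBelow δ₁ 1) (h₂ : WayBelow δ₂ 1)
    (hδ : WayBelow δ (δ₁ * δ₂)) :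
    BR d (BR d A δ₁) δ₂ ⊆ BR d A δ :=
  BR_tensor_general d htri A δ δ₁ δ₂ hδ
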